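/- Let P be a Markov chain on finite nonempty state type S, G ⊆ S a goal set, and C : S → ℝ a nonnegative cost function. Suppose v : S → ℝ satisfies v s ≥ 0 for all s, v s = 0 for all s ∈ G, and v s ≥ C s + ∑_{s' ∈ S} P s s' * v s' for all s ∉ G. Then c n s ≤ v s for every n ∈ ℕ and every s ∈ S. In other words, every nonnegative vector vanishing on the goal states that dominates one step of the cost recursion is an upper bound on the bounded-horizon expected costs, which is the soundness of the expected-cost constraints in the linear-programming characterization. -/

import Mathlib

/-!
The values `costVal n` are the iterates, starting from `0`, of the one-step cost operator `T`,
which is monotone because the transition probabilities are nonnegative. The hypotheses on `v`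
say exactly that `0 ≤ v` and `T v ≤ v`, so by monotonicity `Tⁿ 0 ≤ Tⁿ v ≤ v`.
-/

/-- Bounded-horizon expected-cost values of a Markov chain `P` w.r.t. goal set `G` and cost
function `C`. -/
def costVal {S : Type*} [Fintype S] (P : S → S → ℝ) (G : Set S) [DecidablePred (· ∈ G)]
    (C : S → ℝ) : ℕ → S → ℝ
  | 0, _ => 0
  | n + 1, s => if s ∈ G then 0 else C s + ∑ s', P s s' * costVal P G C n s'

section CostStep

variable {S : Type*} [Fintype S] (P : S → S → ℝ) (G : Set S) [DecidablePred (· ∈ G)]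
  (C : S → ℝ)

def costStep (u : S → ℝ) : S → ℝ :=
  fun s => if s ∈ G then 0 else C s + ∑ s', P s s' * u s'

theorem costVal_succ (n : ℕ) : costVal P G C (n + 1) = costStep P G C (costVal P G C n) := rfl

variable {P} in
theorem costStep_mono (hP : ∀ s s', 0 ≤ P s s') : Monotone (costStep P G C) := by
  intro u w huw s
  unfold costStep
  split_ifs
  · exact le_rfl
  · gcongr with s'
    · exact hP s s'
    · exact huw s'

variable {P G C} in
theorem costStep_le_self {v : S → ℝ} (hvG : ∀ s ∈ G, v s = 0)
    (hvsup : ∀ s ∉ G, C s + ∑ s', P s s' * v s' ≤ v s) : costStep P G C v ≤ v := by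
  intro s
  unfold costStep
  split_ifs with hs
  · exact (hvG s hs).ge
  · exact hvsup s hs

end CostStep

theorem cost_superharmonic_upper_bound_general
    {S : Type*} [Fintype S]
    (P : S → S → ℝ)
    (hP0 : ∀ s s', 0 ≤ P s s')
    (G : Set S) [DecidablePred (· ∈ G)]
    (C : S → ℝ)
    (v : S → ℝ)
    (hv0 : ∀ s, 0 ≤ v s)
    (hvG : ∀ s ∈ G, v s = 0)
    (hvsup : ∀ s ∉ G, C s + ∑ s', P s s' * v s' ≤ v s) :
    ∀ (n : ℕ) (s : S), costVal P G C n s ≤ v s :=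
  fun n => (costStep_mono G C hP0).seq_le_seq n (x := costVal P G C) (y := fun _ => v) hv0
    (fun k _ => (costVal_succ P G C k).le) (fun _ _ => costStep_le_self hvG hvsup)

/-- Every nonnegative vector vanishing on the goal states that dominates one step
of the cost recursion is an upper bound on the bounded-horizon expected costs. -/
theorem cost_superharmonic_upper_bound
    {S : Type*} [Fintype S] [Nonempty S]
    (P : S → S → ℝ)
    (hP0 : ∀ s s', 0 ≤ P s s')
    (hP1 : ∀ s, ∑ s', P s s' = 1)
    (G : Set S) [DecidablePred (· ∈ G)]
    (C : S → ℝ)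
    (hC : ∀ s, 0 ≤ C s)
    (v : S → ℝ)
    (hv0 : ∀ s, 0 ≤ v s)
    (hvG : ∀ s ∈ G, v s = 0)
    (hvsup : ∀ s ∉ G, C s + ∑ s', P s s' * v s' ≤ v s) :
    ∀ (n : ℕ) (s : S), costVal P G C n s ≤ v s :=
  cost_superharmonic_upper_bound_general P hP0 G C v hv0 hvG hvsup
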